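/- Fix M > 0, b > 0, and ε ≥ 0. Let μ and ν be Borel probability measures on [0,M], write opt(μ) = inf_{x ∈ [0,M]} S(x,μ), and let x_ν, x_μ ∈ [0,M] satisfy S(x_ν,ν) = opt(ν) and S(x_μ,μ) = opt(μ). Then: (i) S(x_ν,μ) − opt(μ) ≤ 2b + 2·d_W(μ,ν); (ii) if moreover d_W(μ,ν) ≤ ε and p = min(x_ν + √(b·ε), M), then S(p,μ) − opt(μ) ≤ 4·√(b·ε) + 2ε. -/

import Mathlib

open MeasureTheory

noncomputable section

/-- Cumulative distribution function `F(t) = μ([0,t])`. -/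
def cdf0 (μ : Measure ℝ) (t : ℝ) : ℝ := (μ (Set.Icc 0 t)).toReal

/-- Wasserstein-1 distance between measures on `[0,M]`: `∫₀^M |F(t) - H(t)| dt`. -/
def wassDist (M : ℝ) (μ ν : Measure ℝ) : ℝ :=
  ∫ t in Set.Icc (0:ℝ) M, |cdf0 μ t - cdf0 ν t|

/-- Expected ski-rental cost with buying cost `b`. -/
def skiCost (b x : ℝ) (μ : Measure ℝ) : ℝ :=
  ∫ ξ, (if ξ ≤ x then ξ else b + x) ∂μ

/-- Optimal ski-rental cost `opt(μ) = inf_{x ∈ [0,M]} S(x,μ)`. -/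
def optSki (b M : ℝ) (μ : Measure ℝ) : ℝ := ⨅ x : Set.Icc (0:ℝ) M, skiCost b x.1 μ

/-!
For a measure supported in `[0, ∞)`, Fubini gives `S(x,μ) = b + x - b F(x) - ∫₀ˣ F`. Hence on
`[0,M]`, replacing `ν` by `μ` changes the cost by at most `b (H(x) - F(x)) + d_W(μ,ν)`, and
moving `x` to the right by `δ` changes it by at most `δ - b (H(x+δ) - H(x))`.
Comparing a decision for one measure with the optimum of the other in both directions bounds
the regret by twice the cost of one such transfer. For (i) that cost is at most `b + d_W`.
For (ii), the mass of `ν` below `x` can only escape `[0, x+δ]` under `μ` by moving a distance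
`δ`, so `δ (H(x) - F(x+δ)) ≤ d_W ≤ ε` and `b (H(x) - F(x+δ)) ≤ bε/δ = δ`; the transfer cost
is at most `2δ + d_W`.
-/

open Set Filter Topology

section Cdf

variable {μ ν : Measure ℝ}

lemma cdf0_nonneg (μ : Measure ℝ) (t : ℝ) : 0 ≤ cdf0 μ t := ENNReal.toReal_nonneg

lemma cdf0_le_one [IsProbabilityMeasure μ] (t : ℝ) : cdf0 μ t ≤ 1 := measureReal_le_one

lemma monotone_cdf0 (μ : Measure ℝ) [IsFiniteMeasure μ] : Monotone (cdf0 μ) := fun _ _ h =>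
  ENNReal.toReal_mono (measure_ne_top _ _) (measure_mono (Icc_subset_Icc_right h))

lemma integrableOn_cdf0_Icc (μ : Measure ℝ) [IsFiniteMeasure μ] (a c : ℝ) :
    IntegrableOn (cdf0 μ) (Icc a c) :=
  ((monotone_cdf0 μ).monotoneOn _).integrableOn_isCompact isCompact_Icc

lemma ae_nonneg_of_measure_Icc_eq_one [IsProbabilityMeasure μ] {M : ℝ}
    (hμ : μ (Icc 0 M) = 1) : ∀ᵐ ξ ∂μ, 0 ≤ ξ := by
  have hmem : ∀ᵐ ξ ∂μ, ξ ∈ Icc 0 M :=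
    (ae_iff_measure_eq (p := (· ∈ Icc 0 M)) measurableSet_Icc.nullMeasurableSet).2
      (by rw [ofPred_mem_eq, hμ, measure_univ])
  filter_upwards [hmem] with ξ hξ using hξ.1

lemma measure_Icc_zero_eq_measure_Iic (h0 : ∀ᵐ ξ ∂μ, 0 ≤ ξ) (t : ℝ) :
    μ (Icc 0 t) = μ (Iic t) := by
  rw [← Ici_inter_Iic, inter_comm]
  exact measure_inter_conull h0

lemma cdf0_eq_cdf [IsProbabilityMeasure μ] (h0 : ∀ᵐ ξ ∂μ, 0 ≤ ξ) (t : ℝ) :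
    cdf0 μ t = ProbabilityTheory.cdf μ t := by
  rw [ProbabilityTheory.cdf_eq_real, cdf0, measure_Icc_zero_eq_measure_Iic h0, measureReal_def]

lemma continuousWithinAt_cdf0 [IsProbabilityMeasure μ] (h0 : ∀ᵐ ξ ∂μ, 0 ≤ ξ) (x : ℝ) :
    ContinuousWithinAt (cdf0 μ) (Ici x) x :=
  ((ProbabilityTheory.cdf μ).right_continuous x).congr (fun t _ => cdf0_eq_cdf h0 t)
    (cdf0_eq_cdf h0 x)

end Cdf

section Wasserstein

variable {M : ℝ} {μ ν : Measure ℝ}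

lemma wassDist_nonneg : 0 ≤ wassDist M μ ν := integral_nonneg fun _ => abs_nonneg _

lemma wassDist_comm (M : ℝ) (μ ν : Measure ℝ) : wassDist M μ ν = wassDist M ν μ := by
  simp only [wassDist, abs_sub_comm]

variable [IsFiniteMeasure μ] [IsFiniteMeasure ν]

lemma setIntegral_cdf0_sub_le_wassDist {s : Set ℝ} (hs : s ⊆ Icc 0 M) :
    ∫ t in s, (cdf0 ν t - cdf0 μ t) ≤ wassDist M μ ν := by
  have hint : IntegrableOn (fun t => cdf0 ν t - cdf0 μ t) (Icc 0 M) :=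
    (integrableOn_cdf0_Icc ν 0 M).sub (integrableOn_cdf0_Icc μ 0 M)
  have habs : IntegrableOn (fun t => |cdf0 μ t - cdf0 ν t|) (Icc 0 M) :=
    ((integrableOn_cdf0_Icc μ 0 M).sub (integrableOn_cdf0_Icc ν 0 M)).abs
  calc ∫ t in s, (cdf0 ν t - cdf0 μ t)
      ≤ ∫ t in s, |cdf0 μ t - cdf0 ν t| :=
        integral_mono (hint.mono_set hs) (habs.mono_set hs) fun t => by
          rw [abs_sub_comm]; exact le_abs_self _
    _ ≤ wassDist M μ ν :=
        setIntegral_mono_set habs (ae_of_all _ fun _ => abs_nonneg _) hs.eventuallyLE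

lemma mul_sub_cdf0_le_wassDist {x y : ℝ} (hx : 0 ≤ x) (hxy : x ≤ y) (hy : y ≤ M) :
    (y - x) * (cdf0 ν x - cdf0 μ y) ≤ wassDist M μ ν :=
  calc (y - x) * (cdf0 ν x - cdf0 μ y) = ∫ _ in Icc x y, (cdf0 ν x - cdf0 μ y) := by
        rw [setIntegral_const, Real.volume_real_Icc_of_le hxy, smul_eq_mul]
    _ ≤ ∫ t in Icc x y, (cdf0 ν t - cdf0 μ t) :=
        setIntegral_mono_on (integrableOn_const isCompact_Icc.measure_ne_top)
          ((integrableOn_cdf0_Icc ν x y).sub (integrableOn_cdf0_Icc μ x y)) measurableSet_Icc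
          fun t ht => sub_le_sub (monotone_cdf0 ν ht.1) (monotone_cdf0 μ ht.2)
    _ ≤ wassDist M μ ν := setIntegral_cdf0_sub_le_wassDist (Icc_subset_Icc hx hy)

lemma cdf0_le_of_wassDist_nonpos [IsProbabilityMeasure μ] (h0 : ∀ᵐ ξ ∂μ, 0 ≤ ξ)
    (hW : wassDist M μ ν ≤ 0) {x : ℝ} (hx : 0 ≤ x) (hxM : x < M) : cdf0 ν x ≤ cdf0 μ x := by
  refine ge_of_tendsto ((continuousWithinAt_cdf0 h0 x).mono Ioi_subset_Ici_self) ?_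
  filter_upwards [Ioo_mem_nhdsGT hxM] with y hy
  have hmul := mul_sub_cdf0_le_wassDist (μ := μ) (ν := ν) hx hy.1.le hy.2.le
  nlinarith [hy.1]

end Wasserstein

lemma lintegral_measure_Ici_eq_lintegral_measure_Iic (μ ρ : Measure ℝ) [SFinite μ] [SFinite ρ] :
    ∫⁻ ξ, ρ (Ici ξ) ∂μ = ∫⁻ t, μ (Iic t) ∂ρ := by
  have hle : MeasurableSet {p : ℝ × ℝ | p.1 ≤ p.2} := measurableSet_le measurable_fst measurable_snd
  exact (Measure.prod_apply hle).symm.trans (Measure.prod_apply_symm hle)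

lemma integral_max_sub_zero_eq_setIntegral_cdf0 {μ : Measure ℝ} [IsFiniteMeasure μ]
    (h0 : ∀ᵐ ξ ∂μ, 0 ≤ ξ) (x : ℝ) :
    ∫ ξ, max (x - ξ) 0 ∂μ = ∫ t in Icc 0 x, cdf0 μ t := by
  have hvol : ∀ᵐ ξ ∂μ, ENNReal.ofReal (max (x - ξ) 0) = volume.restrict (Icc 0 x) (Ici ξ) := by
    filter_upwards [h0] with ξ hξ
    have hset : Ici ξ ∩ Icc 0 x = Icc ξ x := by
      ext t; simp only [mem_inter_iff, mem_Ici, mem_Icc]; constructor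
      · exact fun h => ⟨h.1, h.2.2⟩
      · exact fun h => ⟨h.1, hξ.trans h.1, h.2⟩
    rw [Measure.restrict_apply measurableSet_Ici, hset, Real.volume_Icc, ENNReal.ofReal_max,
      ENNReal.ofReal_zero, max_eq_left zero_le]
  have hmeas : Measurable fun t => μ (Iic t) :=
    Monotone.measurable fun _ _ h => measure_mono (Iic_subset_Iic.2 h)
  rw [integral_eq_lintegral_of_nonneg_ae (f := fun ξ => max (x - ξ) 0)
      (ae_of_all _ fun _ => le_max_right _ _) (by fun_prop), lintegral_congr_ae hvol,
    lintegral_measure_Ici_eq_lintegral_measure_Iic,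
    ← integral_toReal hmeas.aemeasurable (ae_of_all _ fun _ => measure_lt_top _ _)]
  simp only [cdf0, measure_Icc_zero_eq_measure_Iic h0]

section SkiCost

variable {M b : ℝ} {μ ν : Measure ℝ}

lemma skiCost_eq [IsProbabilityMeasure μ] (h0 : ∀ᵐ ξ ∂μ, 0 ≤ ξ) (b x : ℝ) :
    skiCost b x μ = b + x - b * cdf0 μ x - ∫ t in Icc 0 x, cdf0 μ t := by
  have hpt : (fun ξ => if ξ ≤ x then ξ else b + x) =
      fun ξ => b + x - (Iic x).indicator (fun _ => b) ξ - max (x - ξ) 0 := by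
    funext ξ
    by_cases h : ξ ≤ x
    · simp [h]
    · simp [h, (not_le.1 h).le]
  have hind : Integrable ((Iic x).indicator fun _ => b) μ :=
    (integrable_const b).indicator measurableSet_Iic
  have hmax : Integrable (fun ξ => max (x - ξ) 0) μ := by
    refine Integrable.of_bound (by fun_prop) |x| ?_
    filter_upwards [h0] with ξ hξ
    rw [Real.norm_of_nonneg (le_max_right _ _)]
    exact max_le (by linarith [le_abs_self x]) (abs_nonneg x)
  rw [skiCost, hpt, integral_sub (f := fun ξ => b + x - (Iic x).indicator (fun _ => b) ξ)
      ((integrable_const _).sub hind) hmax,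
    integral_sub (integrable_const _) hind, integral_const,
    integral_indicator_const _ measurableSet_Iic,    integral_max_sub_zero_eq_setIntegral_cdf0 h0]
  simp [cdf0, measureReal_def, measure_Icc_zero_eq_measure_Iic h0, mul_comm]

lemma skiCost_nonneg (h0 : ∀ᵐ ξ ∂μ, 0 ≤ ξ) (hb : 0 ≤ b) {x : ℝ} (hx : 0 ≤ x) :
    0 ≤ skiCost b x μ := by
  refine integral_nonneg_of_ae ?_
  filter_upwards [h0] with ξ hξ
  split_ifs <;> simp only [Pi.zero_apply] <;> linarith

lemma optSki_le_skiCost (h0 : ∀ᵐ ξ ∂μ, 0 ≤ ξ) (hb : 0 ≤ b) {x : ℝ} (hx : x ∈ Icc 0 M) :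
    optSki b M μ ≤ skiCost b x μ :=
  ciInf_le (f := fun y : Icc (0 : ℝ) M => skiCost b y.1 μ)
    ⟨0, forall_mem_range.2 fun y => skiCost_nonneg h0 hb y.2.1⟩ ⟨x, hx⟩

variable [IsProbabilityMeasure μ] [IsProbabilityMeasure ν]

lemma skiCost_le_skiCost_add_sub (h0 : ∀ᵐ ξ ∂μ, 0 ≤ ξ) {x y : ℝ} (hxy : x ≤ y) :
    skiCost b y μ ≤ skiCost b x μ + (y - x) - b * (cdf0 μ y - cdf0 μ x) := by
  have hmono : ∫ t in Icc 0 x, cdf0 μ t ≤ ∫ t in Icc 0 y, cdf0 μ t :=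
    setIntegral_mono_set (integrableOn_cdf0_Icc μ 0 y) (ae_of_all _ (cdf0_nonneg μ))
      (Icc_subset_Icc_right hxy).eventuallyLE
  rw [skiCost_eq h0, skiCost_eq h0]
  linarith

lemma skiCost_sub_skiCost_le (hμ0 : ∀ᵐ ξ ∂μ, 0 ≤ ξ) (hν0 : ∀ᵐ ξ ∂ν, 0 ≤ ξ) {x : ℝ} (hxM : x ≤ M) :
    skiCost b x μ - skiCost b x ν ≤ b * (cdf0 ν x - cdf0 μ x) + wassDist M μ ν := by
  have hW := setIntegral_cdf0_sub_le_wassDist (μ := μ) (ν := ν) (Icc_subset_Icc_right hxM)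
  rw [integral_sub (integrableOn_cdf0_Icc ν 0 x) (integrableOn_cdf0_Icc μ 0 x)] at hW
  rw [skiCost_eq hμ0, skiCost_eq hν0]
  linarith

lemma skiCost_sub_skiCost_le_add_wassDist (hμ0 : ∀ᵐ ξ ∂μ, 0 ≤ ξ) (hν0 : ∀ᵐ ξ ∂ν, 0 ≤ ξ)
    (hb : 0 ≤ b) {x : ℝ} (hxM : x ≤ M) :
    skiCost b x μ - skiCost b x ν ≤ b + wassDist M μ ν := by
  have hcdf : b * (cdf0 ν x - cdf0 μ x) ≤ b :=
    mul_le_of_le_one_right hb (by linarith [cdf0_le_one (μ := ν) x, cdf0_nonneg μ x])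
  linarith [skiCost_sub_skiCost_le (b := b) hμ0 hν0 hxM]

lemma mul_sub_cdf0_min_add_le (hμ : μ (Icc 0 M) = 1) (hb : 0 ≤ b) {ε δ : ℝ}
    (hW : wassDist M μ ν ≤ ε) (hδ : 0 ≤ δ) (hδ_sq : δ * δ = b * ε) {x : ℝ} (hx : x ∈ Icc 0 M) :
    b * (cdf0 ν x - cdf0 μ (min (x + δ) M)) ≤ δ := by
  rcases le_or_gt M (x + δ) with hM | hM
  · rw [min_eq_right hM, show cdf0 μ M = 1 by simp [cdf0, hμ]]
    nlinarith [cdf0_le_one (μ := ν) x]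
  rw [min_eq_left hM.le]
  have hmul := mul_sub_cdf0_le_wassDist (μ := μ) (ν := ν) hx.1 (le_add_of_nonneg_right hδ) hM.le
  rw [add_sub_cancel_left] at hmul
  rcases hδ.eq_or_lt with rfl | hδ0
  · -- `δ = 0` forces `b = 0` or `ε = 0`; in the latter case right-continuity gives `H x ≤ F x`.
    rw [add_zero]
    rcases hb.eq_or_lt with rfl | hb
    · simp
    have hε : ε = 0 := by
      rw [zero_mul, eq_comm, mul_eq_zero] at hδ_sq
      exact hδ_sq.resolve_left hb.ne'
    have hle := cdf0_le_of_wassDist_nonpos (ae_nonneg_of_measure_Icc_eq_one hμ)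
      (hW.trans_eq hε) hx.1 (by linarith)
    nlinarith
  · refine le_of_mul_le_mul_left ?_ hδ0
    calc δ * (b * (cdf0 ν x - cdf0 μ (x + δ))) = b * (δ * (cdf0 ν x - cdf0 μ (x + δ))) := by ring
      _ ≤ b * ε := mul_le_mul_of_nonneg_left (hmul.trans hW) hb
      _ = δ * δ := hδ_sq.symm

lemma skiCost_min_add_sub_skiCost_le (hμ : μ (Icc 0 M) = 1) (hν : ν (Icc 0 M) = 1)
    (hb : 0 ≤ b) {ε δ : ℝ} (hW : wassDist M μ ν ≤ ε) (hδ : 0 ≤ δ) (hδ_sq : δ * δ = b * ε)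
    {x : ℝ} (hx : x ∈ Icc 0 M) :
    skiCost b (min (x + δ) M) μ - skiCost b x ν ≤ 2 * δ + wassDist M μ ν := by
  have hν0 := ae_nonneg_of_measure_Icc_eq_one hν
  have hxp : x ≤ min (x + δ) M := le_min (le_add_of_nonneg_right hδ) hx.2
  linarith [min_le_left (x + δ) M,
    skiCost_sub_skiCost_le (b := b) (ae_nonneg_of_measure_Icc_eq_one hμ) hν0
      (min_le_right (x + δ) M),
    skiCost_le_skiCost_add_sub (b := b) hν0 hxp, mul_sub_cdf0_min_add_le hμ hb hW hδ hδ_sq hx]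

end SkiCost

theorem ski_rental_SAA_and_inflated_regret_general
    (M b ε : ℝ) (hb : 0 < b)
    (μ ν : Measure ℝ) [IsProbabilityMeasure μ] [IsProbabilityMeasure ν]
    (hμ : μ (Set.Icc 0 M) = 1) (hν : ν (Set.Icc 0 M) = 1)
    (xν xμ : ℝ) (hmemν : xν ∈ Set.Icc (0:ℝ) M) (hmemμ : xμ ∈ Set.Icc (0:ℝ) M)
    (hxν : skiCost b xν ν = optSki b M ν) (hxμ : skiCost b xμ μ = optSki b M μ) :
    skiCost b xν μ - optSki b M μ ≤ 2 * b + 2 * wassDist M μ ν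
    ∧
    (wassDist M μ ν ≤ ε →
      skiCost b (min (xν + Real.sqrt (b * ε)) M) μ - optSki b M μ ≤
        4 * Real.sqrt (b * ε) + 2 * ε) := by
  have hμ0 := ae_nonneg_of_measure_Icc_eq_one hμ
  have hν0 := ae_nonneg_of_measure_Icc_eq_one hν
  refine ⟨?_, fun hW => ?_⟩
  · have hμν := skiCost_sub_skiCost_le_add_wassDist hμ0 hν0 hb.le hmemν.2
    have hνμ := skiCost_sub_skiCost_le_add_wassDist hν0 hμ0 hb.le hmemμ.2
    rw [wassDist_comm] at hνμ
    linarith [optSki_le_skiCost hν0 hb.le hmemμ]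
  · have hδ := Real.sqrt_nonneg (b * ε)
    have hδ_sq := Real.mul_self_sqrt (mul_nonneg hb.le (wassDist_nonneg.trans hW))
    have hμν := skiCost_min_add_sub_skiCost_le hμ hν hb.le hW hδ hδ_sq hmemν
    have hνμ := skiCost_min_add_sub_skiCost_le hν hμ hb.le (wassDist_comm M ν μ ▸ hW) hδ hδ_sq hmemμ
    rw [wassDist_comm] at hνμ
    have hq : min (xμ + √(b * ε)) M ∈ Icc 0 M :=
      ⟨le_min (by linarith [hmemμ.1]) (hmemμ.1.trans hmemμ.2),
        min_le_right _ _⟩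
    linarith [optSki_le_skiCost hν0 hb.le hq]

/-- Ski rental under Wasserstein heterogeneity: (i) the SAA decision has regret at most
`2b + 2 d_W(μ,ν)`; (ii) the `√(bε)`-inflated SAA decision has regret at most
`4√(bε) + 2ε`. -/
theorem ski_rental_SAA_and_inflated_regret
    (M b ε : ℝ) (hM : 0 < M) (hb : 0 < b) (hε : 0 ≤ ε)
    (μ ν : Measure ℝ) [IsProbabilityMeasure μ] [IsProbabilityMeasure ν]
    (hμ : μ (Set.Icc 0 M) = 1) (hν : ν (Set.Icc 0 M) = 1)
    (xν xμ : ℝ) (hmemν : xν ∈ Set.Icc (0:ℝ) M) (hmemμ : xμ ∈ Set.Icc (0:ℝ) M)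
    (hxν : skiCost b xν ν = optSki b M ν) (hxμ : skiCost b xμ μ = optSki b M μ) :
    skiCost b xν μ - optSki b M μ ≤ 2 * b + 2 * wassDist M μ ν
    ∧
    (wassDist M μ ν ≤ ε →
      skiCost b (min (xν + Real.sqrt (b * ε)) M) μ - optSki b M μ ≤
        4 * Real.sqrt (b * ε) + 2 * ε) :=
  ski_rental_SAA_and_inflated_regret_general M b ε hb μ ν hμ hν xν xμ hmemν hmemμ hxν hxμ

end
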